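/- G2S is a left inverse of S2G on nondegenerate configurations: if g anti-commutes with exactly one stabilizer generator s_k of (Stab, Gauge) and g ∉ Gauge, then applying S2G with new gauge g followed by G2S promoting g (removing the unique anti-commuting gauge partner s_k) returns the stabilizer group ⟨Stab⟩ with s_k replaced by g, while applying S2G with new gauge g followed by G2S promoting s_k instead recovers the original ⟨Stab⟩. -/
import Mathlib


/-- The symplectic form on `𝔽₂ⁿ × 𝔽₂ⁿ`; two Pauli strings anti-commute iff it is `1`. -/
def symp {n : ℕ} (v w : (Fin n → ZMod 2) × (Fin n → ZMod 2)) : ZMod 2 :=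
  ∑ k, (v.1 k * w.2 k + v.2 k * w.1 k)

/-- S2G in the symplectic model: move the stabilizers anti-commuting with `g`
into the gauge set and add `g` to the gauge set. -/
def S2Gv {n : ℕ} (g : (Fin n → ZMod 2) × (Fin n → ZMod 2))
    (p : Set ((Fin n → ZMod 2) × (Fin n → ZMod 2)) ×
         Set ((Fin n → ZMod 2) × (Fin n → ZMod 2))) :
    Set ((Fin n → ZMod 2) × (Fin n → ZMod 2)) ×
      Set ((Fin n → ZMod 2) × (Fin n → ZMod 2)) :=
  ({s ∈ p.1 | symp g s = 0}, p.2 ∪ {s ∈ p.1 | symp g s = 1} ∪ {g})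

/-- G2S in the symplectic model: promote `h` from the gauge set to the stabilizer
set, deleting from the gauge set `h` and everything anti-commuting with `h`. -/
def G2Sv {n : ℕ} (h : (Fin n → ZMod 2) × (Fin n → ZMod 2))
    (p : Set ((Fin n → ZMod 2) × (Fin n → ZMod 2)) ×
         Set ((Fin n → ZMod 2) × (Fin n → ZMod 2))) :
    Set ((Fin n → ZMod 2) × (Fin n → ZMod 2)) ×
      Set ((Fin n → ZMod 2) × (Fin n → ZMod 2)) :=
  (p.1 ∪ {h}, (p.2 \ {w | symp h w = 1}) \ {h})

theorem G2S_left_inverse_S2G {n : ℕ}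
    (Stab Gauge : Set ((Fin n → ZMod 2) × (Fin n → ZMod 2)))
    (g sk : (Fin n → ZMod 2) × (Fin n → ZMod 2))
    (hsk : sk ∈ Stab)
    (hunique : ∀ s ∈ Stab, (symp g s = 1 ↔ s = sk))
    (hgG : g ∉ Gauge) :
    Submodule.span (ZMod 2) (G2Sv g (S2Gv g (Stab, Gauge))).1
        = Submodule.span (ZMod 2) ((Stab \ {sk}) ∪ {g}) ∧
    Submodule.span (ZMod 2) (G2Sv sk (S2Gv g (Stab, Gauge))).1
        = Submodule.span (ZMod 2) Stab := by
  have hset : {s ∈ Stab | symp g s = 0} = Stab \ {sk} := by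
    ext s
    simp only [Set.mem_setOf_eq, Set.mem_diff, Set.mem_singleton_iff]
    constructor
    · rintro ⟨hs, h0⟩
      refine ⟨hs, fun he => ?_⟩
      rw [(hunique s hs).2 he] at h0
      exact one_ne_zero h0
    · rintro ⟨hs, hne⟩
      refine ⟨hs, ?_⟩
      have : ∀ x : ZMod 2, ¬ x = 1 → x = 0 := by decide
      exact this _ (fun h1 => hne ((hunique s hs).1 h1))
  constructor
  · simp only [G2Sv, S2Gv, hset]
  · simp only [G2Sv, S2Gv, hset]
    congr 1
    ext s
    simp only [Set.mem_union, Set.mem_diff, Set.mem_singleton_iff]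
    constructor
    · rintro (⟨hs, _⟩ | he)
      · exact hs
      · exact he ▸ hsk
    · intro hs
      by_cases he : s = sk
      · exact Or.inr he
      · exact Or.inl ⟨hs, he⟩
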